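/- arXiv:1910.07081 — 3 statements merged into one kernel-verified Lean document; each statement's English description precedes it below -/
import Mathlib

section
/- For a coordinate sphere of radius r in the Reissner–Nordström time slice with mass m and charge Q (with m ≥ |Q| and r ≥ m + √(m² − Q²)), the Brown–York mass m_BY(r) = r(1 − √(1 − 2m/r + Q²/r²)) is monotonically nonincreasing in r. -/
open Real

theorem stmt_0 (m Q : ℝ) (hmQ : |Q| ≤ m)
    (r₁ r₂ : ℝ) (hr₁ : m + Real.sqrt (m ^ 2 - Q ^ 2) ≤ r₁) (h12 : r₁ ≤ r₂) :
    r₂ * (1 - Real.sqrt (1 - 2 * m / r₂ + Q ^ 2 / r₂ ^ 2)) ≤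
      r₁ * (1 - Real.sqrt (1 - 2 * m / r₁ + Q ^ 2 / r₁ ^ 2)) := by
  have hm0 : 0 ≤ m := (abs_nonneg Q).trans hmQ
  have hQ2 : Q ^ 2 ≤ m ^ 2 := by nlinarith [sq_abs Q, abs_nonneg Q]
  rcases eq_or_lt_of_le hm0 with hm | hm
  · have hQ : Q = 0 := by
      have : |Q| ≤ 0 := hm ▸ hmQ
      simpa using le_antisymm this (abs_nonneg Q)
    subst hQ
    rw [← hm]
    simp
  · have hsd : 0 ≤ m ^ 2 - Q ^ 2 := by linarith
    have hsq : Real.sqrt (m ^ 2 - Q ^ 2) ^ 2 = m ^ 2 - Q ^ 2 := Real.sq_sqrt hsd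
    have hsn : 0 ≤ Real.sqrt (m ^ 2 - Q ^ 2) := Real.sqrt_nonneg _
    have hr1pos : 0 < r₁ := lt_of_lt_of_le (by linarith) hr₁
    have hr2pos : 0 < r₂ := lt_of_lt_of_le hr1pos h12
    have hg1 : 0 ≤ r₁ ^ 2 - 2 * m * r₁ + Q ^ 2 := by nlinarith
    have hg2 : 0 ≤ r₂ ^ 2 - 2 * m * r₂ + Q ^ 2 := by nlinarith
    have rew : ∀ r : ℝ, 0 < r → 0 ≤ r ^ 2 - 2 * m * r + Q ^ 2 →
        r * (1 - Real.sqrt (1 - 2 * m / r + Q ^ 2 / r ^ 2)) =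
          r - Real.sqrt (r ^ 2 - 2 * m * r + Q ^ 2) := by
      intro r hr hg
      have h1 : 1 - 2 * m / r + Q ^ 2 / r ^ 2 = (r ^ 2 - 2 * m * r + Q ^ 2) / r ^ 2 := by
        field_simp
      rw [h1, Real.sqrt_div hg, Real.sqrt_sq hr.le]
      field_simp
    rw [rew r₁ hr1pos hg1, rew r₂ hr2pos hg2]
    set s₁ := Real.sqrt (r₁ ^ 2 - 2 * m * r₁ + Q ^ 2) with hs₁
    have hs₁n : 0 ≤ s₁ := Real.sqrt_nonneg _
    have hs₁sq : s₁ ^ 2 = r₁ ^ 2 - 2 * m * r₁ + Q ^ 2 := Real.sq_sqrt hg1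
    have h1le : s₁ ≤ r₁ - m := by
      have : s₁ ≤ Real.sqrt ((r₁ - m) ^ 2) := Real.sqrt_le_sqrt (by nlinarith)
      rwa [Real.sqrt_sq (by nlinarith)] at this
    have key : r₂ - r₁ + s₁ ≤ Real.sqrt (r₂ ^ 2 - 2 * m * r₂ + Q ^ 2) := by
      have hsq2 : (r₂ - r₁ + s₁) ^ 2 ≤ r₂ ^ 2 - 2 * m * r₂ + Q ^ 2 := by nlinarith
      have := Real.sqrt_le_sqrt hsq2
      rwa [Real.sqrt_sq (by linarith)] at this
    linarith
end

section
/- Pointwise energy density inequality for the Jang deformation (algebraic form): with Ē_i = (E_i + f_i f^j E_j)/√(1+|∇f|²) and the Jang metric ḡ_{ij} = g_{ij} + f_i f_j (whose inverse is ḡ^{ij} = g^{ij} − fⁱf^j/(1+|∇f|²)), one has |Ē|²_ḡ ≤ |E|²_g. -/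
open RealInnerProductSpace

theorem stmt_13 {V : Type*} [NormedAddCommGroup V] [InnerProductSpace ℝ V]
    (E f : V) :
    ⟪(Real.sqrt (1 + ‖f‖ ^ 2))⁻¹ • (E + ⟪f, E⟫ • f),
        (Real.sqrt (1 + ‖f‖ ^ 2))⁻¹ • (E + ⟪f, E⟫ • f)⟫ -
      ⟪f, (Real.sqrt (1 + ‖f‖ ^ 2))⁻¹ • (E + ⟪f, E⟫ • f)⟫ ^ 2 / (1 + ‖f‖ ^ 2) ≤
      ⟪E, E⟫ := by
  have hs : (0:ℝ) < 1 + ‖f‖ ^ 2 := by positivity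
  have hsq : Real.sqrt (1 + ‖f‖ ^ 2) * Real.sqrt (1 + ‖f‖ ^ 2) = 1 + ‖f‖ ^ 2 :=
    Real.mul_self_sqrt hs.le
  have hsqpos : 0 < Real.sqrt (1 + ‖f‖ ^ 2) := Real.sqrt_pos.mpr hs
  have hcs : ⟪f, E⟫ ^ 2 ≤ ‖f‖ ^ 2 * ‖E‖ ^ 2 := by
    have h := abs_real_inner_le_norm f E
    nlinarith [abs_nonneg (⟪f, E⟫ : ℝ), sq_abs (⟪f, E⟫ : ℝ), norm_nonneg f, norm_nonneg E]
  have hff : ⟪f, f⟫ = ‖f‖ ^ 2 := real_inner_self_eq_norm_sq f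
  have hEE : ⟪E, E⟫ = ‖E‖ ^ 2 := real_inner_self_eq_norm_sq E
  have hEf : ⟪E, f⟫ = ⟪f, E⟫ := (real_inner_comm E f).symm
  simp only [inner_add_left, inner_add_right, real_inner_smul_left, real_inner_smul_right,
    hff, hEE, hEf]
  rw [sub_le_iff_le_add]
  set a : ℝ := ⟪f, E⟫
  set r : ℝ := Real.sqrt (1 + ‖f‖ ^ 2)
  have hr : r ≠ 0 := ne_of_gt hsqpos
  field_simp
  have hr2 : r ^ 2 = 1 + ‖f‖ ^ 2 := by rw [sq]; exact hsq
  rw [hr2]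
  nlinarith [mul_nonneg (mul_nonneg (sub_nonneg.mpr hcs) hs.le) hs.le, hs, sq_nonneg a]
end

section
/- Derivative of mollified jump function: if X: ℝ → ℝ is bounded, smooth on ℝ∖{0} with bounded derivative on each side and one-sided limits X_± at 0, and X_δ(t) = ∫ X(s)·(50/δ²)·φ(100(t−s)/δ²) ds for |t| < δ/4 (φ a standard mollifier with ∫φ = 1), then X_δ'(t) = (X_+ − X_−)·(50/δ²)·φ(100t/δ²) + O(1) uniformly for |t| ≤ δ²/50 as δ → 0. -/
open Real MeasureTheory Filter Set

lemma my_integral_Iio_of_hasDerivAt_of_tendsto {f f' : ℝ → ℝ} {a m : ℝ}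
    (hcont : ContinuousWithinAt f (Iic a) a)
    (hderiv : ∀ x ∈ Iio a, HasDerivAt f (f' x) x)
    (f'int : IntegrableOn f' (Iio a))
    (hf : Tendsto f atBot (nhds m)) :
    ∫ x in Iio a, f' x = f a - m := by
  have A : MeasurableEmbedding (fun x : ℝ => -x) :=
    (Homeomorph.neg ℝ).isClosedEmbedding.measurableEmbedding
  have hg : ∀ x ∈ Ioi (-a), HasDerivAt (fun y => f (-y)) (f' (-x) * (-1)) x := by
    intro x hx
    have h1 : HasDerivAt (fun y : ℝ => -y) (-1) x := by
      exact hasDerivAt_neg x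
    have hx' : -x ∈ Iio a := by simp only [mem_Ioi] at hx; simpa using neg_lt.2 hx
    exact (hderiv (-x) hx').comp x h1
  have hgint : IntegrableOn (fun x => f' (-x) * (-1)) (Ioi (-a)) := by
    have h1 : IntegrableOn (fun x => f' (-x)) (Ioi (-a)) := by
      have hset : ((fun x : ℝ => -x) ⁻¹' Iio a) = Ioi (-a) := by
        ext x; simp [neg_lt, lt_neg]
      have h2 : (volume : Measure ℝ).restrict (Iio a)
          = Measure.map (fun x : ℝ => -x) ((volume : Measure ℝ).restrict (Ioi (-a))) := by
        conv_lhs => rw [← Measure.map_neg_eq_self (volume : Measure ℝ)]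
        rw [Measure.restrict_map A.measurable measurableSet_Iio, hset]
      rw [IntegrableOn, h2, A.integrable_map_iff] at f'int
      exact f'int
    have he : (fun x => f' (-x) * (-1)) = fun x => -(f' (-x)) := by funext x; ring
    rw [he]; exact h1.neg
  have hgcont : ContinuousWithinAt (fun y => f (-y)) (Ici (-a)) (-a) := by
    have hn : ContinuousWithinAt (fun y : ℝ => -y) (Ici (-a)) (-a) :=
      continuous_neg.continuousWithinAt
    have hc2 : ContinuousWithinAt f (Iic a) ((fun y : ℝ => -y) (-a)) := by
      simpa using hcont
    refine hc2.comp hn ?_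
    intro x hx
    simp only [mem_Ici] at hx
    simp only [mem_preimage, mem_Iic]
    exact neg_le.1 hx
  have hgt : Tendsto (fun y => f (-y)) atTop (nhds m) :=
    hf.comp tendsto_neg_atTop_atBot
  have key := integral_Ioi_of_hasDerivAt_of_tendsto hgcont hg hgint hgt
  have key2 : ∫ x in Ioi (-a), f' (-x) * (-1) = -∫ x in Ioi (-a), f' (-x) := by
    rw [← integral_neg]; congr 1; ext x; ring
  rw [key2, integral_comp_neg_Ioi, neg_neg, integral_Iic_eq_integral_Iio] at key
  linarith

theorem stmt_17 (φ X : ℝ → ℝ) (B M Xp Xm : ℝ)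
    (hφ : ContDiff ℝ (⊤ : ℕ∞) φ) (hφsupp : Function.support φ ⊆ Set.Ioo (-1) 1)
    (hφ0 : ∀ s, 0 ≤ φ s) (hφ1 : ∀ s, φ s ≤ 1) (hφint : ∫ s, φ s = 1)
    (hXb : ∀ t, |X t| ≤ B)
    (hXd : ∀ t : ℝ, t ≠ 0 → DifferentiableAt ℝ X t ∧ |deriv X t| ≤ M)
    (hXp : Tendsto X (nhdsWithin 0 (Set.Ioi 0)) (nhds Xp))
    (hXm : Tendsto X (nhdsWithin 0 (Set.Iio 0)) (nhds Xm)) :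
    ∃ C : ℝ, ∀ δ : ℝ, 0 < δ → ∀ t : ℝ, |t| ≤ δ ^ 2 / 50 →
      |deriv (fun t' => ∫ s, X s * (50 / δ ^ 2) * φ (100 * (t' - s) / δ ^ 2)) t -
          (Xp - Xm) * (50 / δ ^ 2) * φ (100 * t / δ ^ 2)| ≤ C := by
  have hM0 : 0 ≤ M := le_trans (abs_nonneg _) (hXd 1 one_ne_zero).2
  have hB0 : 0 ≤ B := le_trans (abs_nonneg _) (hXb 0)
  have hφc : Continuous φ := hφ.continuous
  have hφd : Differentiable ℝ φ := hφ.differentiable (by simp)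
  have hφ'c : Continuous (deriv φ) := hφ.continuous_deriv (by simp)
  have hφz : ∀ x : ℝ, 1 ≤ |x| → φ x = 0 := by
    intro x hx
    by_contra h
    have hmem := hφsupp h
    rw [Set.mem_Ioo] at hmem
    have : |x| < 1 := abs_lt.2 ⟨hmem.1, hmem.2⟩
    linarith
  have hφcs : HasCompactSupport φ :=
    HasCompactSupport.intro (isCompact_Icc (a := (-1:ℝ)) (b := 1))
      (fun x hx => by
        apply hφz
        rw [mem_Icc, not_and_or] at hx
        rcases hx with hx | hx <;> push_neg at hx <;> rw [le_abs] <;> [right; left] <;> linarith)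
  have hφ'z : ∀ x : ℝ, 1 < |x| → deriv φ x = 0 := by
    intro x hx
    have h2 : tsupport φ ⊆ Icc (-1) 1 := by
      refine (closure_mono hφsupp).trans ?_
      rw [closure_Ioo (by norm_num : (-1:ℝ) ≠ 1)]
    have hnot : x ∉ tsupport φ := by
      intro hmem
      have := h2 hmem
      rw [mem_Icc] at this
      have : |x| ≤ 1 := abs_le.2 this
      linarith
    have hev : φ =ᶠ[nhds x] 0 := notMem_tsupport_iff_eventuallyEq.1 hnot
    rw [hev.deriv_eq]
    exact deriv_const x 0
  have hφ'z1 : ∀ x : ℝ, 1 ≤ |x| → deriv φ x = 0 := by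
    intro x hx
    rcases eq_or_lt_of_le hx with heq | hlt
    · have hclosed : IsClosed {y : ℝ | deriv φ y = 0} := isClosed_eq hφ'c continuous_const
      have hsub : closure {y : ℝ | 1 < |y|} ⊆ {y : ℝ | deriv φ y = 0} :=
        closure_minimal (fun y hy => hφ'z y hy) hclosed
      have hcl : x ∈ closure {y : ℝ | 1 < |y|} := by
        rcases (abs_eq (by norm_num : (0:ℝ) ≤ 1)).1 heq.symm with rfl | rfl
        · have h1 : Ioi (1:ℝ) ⊆ {y : ℝ | 1 < |y|} := by
            intro y hy; simp only [mem_setOf_eq]; rw [lt_abs]; left; exact hy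
          have : (1:ℝ) ∈ closure (Ioi (1:ℝ)) := by rw [closure_Ioi]; exact self_mem_Ici
          exact closure_mono h1 this
        · have h1 : Iio (-1:ℝ) ⊆ {y : ℝ | 1 < |y|} := by
            intro y hy; simp only [mem_setOf_eq]; rw [lt_abs]; right
            simp only [mem_Iio] at hy; linarith
          have : (-1:ℝ) ∈ closure (Iio (-1:ℝ)) := by rw [closure_Iio]; exact self_mem_Iic
          exact closure_mono h1 this
      exact hsub hcl
    · exact hφ'z x hlt
  obtain ⟨K, hK⟩ := (hφcs.deriv).exists_bound_of_continuous hφ'c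
  have hK' : ∀ x, |deriv φ x| ≤ K := fun x => by simpa using hK x
  have hK0 : 0 ≤ K := le_trans (abs_nonneg _) (hK' 0)
  have hXmeas : AEStronglyMeasurable X (volume : Measure ℝ) := by
    have hc : ContinuousOn X ({(0:ℝ)}ᶜ) := fun x hx =>
      ((hXd x hx).1).continuousAt.continuousWithinAt
    have h1 : AEStronglyMeasurable X ((volume : Measure ℝ).restrict {(0:ℝ)}ᶜ) :=
      hc.aestronglyMeasurable (measurableSet_singleton 0).compl
    have h2 : (volume : Measure ℝ).restrict {(0:ℝ)}ᶜ = volume := by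
      apply Measure.restrict_eq_self_of_ae_mem
      rw [ae_iff]
      simp only [mem_compl_iff, mem_singleton_iff, not_not, setOf_eq_eq_singleton]
      exact Real.volume_singleton
    rwa [h2] at h1
  have hae0 : ∀ᵐ s : ℝ, s ≠ (0:ℝ) := by
    rw [ae_iff]
    simp only [not_not, setOf_eq_eq_singleton]
    exact Real.volume_singleton
  refine ⟨2 * M, ?_⟩
  intro δ hδ t ht
  have hδ2 : (0:ℝ) < δ ^ 2 := by positivity
  set k : ℝ := 100 / δ ^ 2 with hk
  set c : ℝ := 50 / δ ^ 2 with hc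
  have hkpos : 0 < k := by rw [hk]; positivity
  have hcpos : 0 < c := by rw [hc]; positivity
  have hrw : ∀ x : ℝ, 100 * x / δ ^ 2 = k * x := fun x => by rw [hk]; ring
  have hcomp_cont : ∀ x : ℝ, Continuous (fun s => φ (k * (x - s))) := fun x =>
    hφc.comp (continuous_const.mul (continuous_const.sub continuous_id))
  have hcomp'_cont : ∀ x : ℝ, Continuous (fun s => deriv φ (k * (x - s))) := fun x =>
    hφ'c.comp (continuous_const.mul (continuous_const.sub continuous_id))
  -- vanishing facts
  have hφz' : ∀ x s : ℝ, 1 / k ≤ |x - s| → φ (k * (x - s)) = 0 := by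
    intro x s hxs
    apply hφz
    rw [abs_mul, abs_of_pos hkpos]
    calc (1:ℝ) = k * (1 / k) := by field_simp
    _ ≤ k * |x - s| := by gcongr
  have hφ'z' : ∀ x s : ℝ, 1 / k ≤ |x - s| → deriv φ (k * (x - s)) = 0 := by
    intro x s hxs
    apply hφ'z1
    rw [abs_mul, abs_of_pos hkpos]
    calc (1:ℝ) = k * (1 / k) := by field_simp
    _ ≤ k * |x - s| := by gcongr
  -- Step 1: differentiation under the integral sign
  have hFmeas : ∀ᶠ x in nhds t,
      AEStronglyMeasurable (fun s => X s * c * φ (k * (x - s))) (volume : Measure ℝ) :=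
    Eventually.of_forall fun x =>
      (hXmeas.mul_const c).mul (hcomp_cont x).aestronglyMeasurable
  have hFint : Integrable (fun s => X s * c * φ (k * (t - s))) := by
    refine Integrable.mono'
      (g := fun s => (Icc (t - 1/k) (t + 1/k)).indicator (fun _ => B * c) s)
      ?_ ((hXmeas.mul_const c).mul (hcomp_cont t).aestronglyMeasurable) ?_
    · rw [integrable_indicator_iff measurableSet_Icc]
      exact integrableOn_const measure_Icc_lt_top.ne
    · refine Eventually.of_forall fun s => ?_
      by_cases hs : s ∈ Icc (t - 1/k) (t + 1/k)
      · simp only [indicator_of_mem hs]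
        rw [Real.norm_eq_abs, abs_mul, abs_mul, abs_of_pos hcpos,
          abs_of_nonneg (hφ0 _)]
        calc |X s| * c * φ (k * (t - s)) ≤ B * c * 1 := by
              gcongr <;> first | positivity | exact hφ0 _ | exact hφ1 _ | exact hXb s
        _ = B * c := by ring
      · have hfar : 1 / k ≤ |t - s| := by
          rw [mem_Icc, not_and_or] at hs
          rcases hs with hs | hs <;> push_neg at hs <;> rw [le_abs] <;>
            [left; right] <;> linarith
        simp only [indicator_of_notMem hs, hφz' t s hfar]
        simp
  have hF'meas : AEStronglyMeasurable
      (fun s => X s * c * (deriv φ (k * (t - s)) * k)) (volume : Measure ℝ) :=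
    (hXmeas.mul_const c).mul
      ((hcomp'_cont t).mul continuous_const).aestronglyMeasurable
  have h_bound : ∀ᵐ s : ℝ, ∀ x ∈ Metric.ball t 1,
      ‖X s * c * (deriv φ (k * (x - s)) * k)‖ ≤
        (Icc (t - (1 + 1/k)) (t + (1 + 1/k))).indicator (fun _ => B * c * (K * k)) s := by
    refine Eventually.of_forall fun s x hx => ?_
    by_cases hs : s ∈ Icc (t - (1 + 1/k)) (t + (1 + 1/k))
    · simp only [indicator_of_mem hs]
      rw [Real.norm_eq_abs, abs_mul, abs_mul, abs_mul,
        abs_of_pos hcpos, abs_of_pos hkpos]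
      gcongr <;> first | positivity | exact hXb s | exact hK' _
    · have h1 : 1 + 1/k < |t - s| := by
        rw [mem_Icc, not_and_or] at hs
        rcases hs with hs | hs <;> push_neg at hs <;> rw [lt_abs] <;>
          [left; right] <;> linarith
      have h2 : |x - t| < 1 := by
        have := Metric.mem_ball.1 hx
        rwa [Real.dist_eq] at this
      have h3 : 1 / k < |x - s| := by
        have htri : |t - s| ≤ |t - x| + |x - s| := abs_sub_le t x s
        rw [abs_sub_comm t x] at htri
        linarith
      simp only [indicator_of_notMem hs, hφ'z' x s h3.le]
      simp
  have hbound_int : Integrable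
      ((Icc (t - (1 + 1/k)) (t + (1 + 1/k))).indicator (fun _ => B * c * (K * k))) := by
    rw [integrable_indicator_iff measurableSet_Icc]
    exact integrableOn_const measure_Icc_lt_top.ne
  have h_diff : ∀ᵐ s : ℝ, ∀ x ∈ Metric.ball t 1,
      HasDerivAt (fun x => X s * c * φ (k * (x - s)))
        (X s * c * (deriv φ (k * (x - s)) * k)) x := by
    refine Eventually.of_forall fun s x _ => ?_
    have hinner : HasDerivAt (fun x : ℝ => k * (x - s)) k x := by
      simpa using HasDerivAt.const_mul k ((hasDerivAt_id x).sub_const s)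
    have h2 : HasDerivAt (fun x => φ (k * (x - s))) (deriv φ (k * (x - s)) * k) x :=
      ((hφd (k * (x - s))).hasDerivAt).comp x hinner
    exact HasDerivAt.const_mul (X s * c) h2
  obtain ⟨hF'int, hderivF⟩ :=
    hasDerivAt_integral_of_dominated_loc_of_deriv_le (Metric.ball_mem_nhds t one_pos) hFmeas hFint hF'meas
      h_bound hbound_int h_diff
  have hfun : (fun t' => ∫ s, X s * c * φ (100 * (t' - s) / δ ^ 2)) =
      (fun t' => ∫ s, X s * c * φ (k * (t' - s))) := by
    funext t'; congr 1; funext s; rw [hrw]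
  have hderiv_eq : deriv (fun t' => ∫ s, X s * c * φ (100 * (t' - s) / δ ^ 2)) t =
      ∫ s, X s * c * (deriv φ (k * (t - s)) * k) := by
    rw [hfun]
    exact hderivF.deriv
  -- integrability of the pieces ψ and G
  have hψmeas : AEStronglyMeasurable (fun s => deriv X s * φ (k * (t - s)))
      (volume : Measure ℝ) :=
    (measurable_deriv X).aestronglyMeasurable.mul (hcomp_cont t).aestronglyMeasurable
  have hψbound : ∀ᵐ s : ℝ, ‖deriv X s * φ (k * (t - s))‖ ≤
      (Icc (t - 1/k) (t + 1/k)).indicator (fun _ => M) s := by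
    refine hae0.mono fun s hs => ?_
    by_cases hmem : s ∈ Icc (t - 1/k) (t + 1/k)
    · simp only [indicator_of_mem hmem]
      rw [Real.norm_eq_abs, abs_mul, abs_of_nonneg (hφ0 _)]
      calc |deriv X s| * φ (k * (t - s)) ≤ M * 1 := by
            gcongr <;> first | positivity | exact hφ0 _ | exact hφ1 _ | exact (hXd s hs).2
      _ = M := by ring
    · have hfar : 1 / k ≤ |t - s| := by
        rw [mem_Icc, not_and_or] at hmem
        rcases hmem with hmem | hmem <;> push_neg at hmem <;> rw [le_abs] <;>
          [left; right] <;> linarith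
      simp only [indicator_of_notMem hmem, hφz' t s hfar]
      simp
  have hψboundInt : Integrable ((Icc (t - 1/k) (t + 1/k)).indicator (fun _ => M)) := by
    rw [integrable_indicator_iff measurableSet_Icc]
    exact integrableOn_const measure_Icc_lt_top.ne
  have hψint : Integrable (fun s => deriv X s * φ (k * (t - s))) :=
    Integrable.mono' hψboundInt hψmeas hψbound
  have hGmeas : AEStronglyMeasurable
      (fun s => deriv X s * φ (k * (t - s)) + X s * (deriv φ (k * (t - s)) * (-k)))
      (volume : Measure ℝ) :=
    hψmeas.add (hXmeas.mul ((hcomp'_cont t).mul continuous_const).aestronglyMeasurable)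
  have hGint : Integrable
      (fun s => deriv X s * φ (k * (t - s)) + X s * (deriv φ (k * (t - s)) * (-k))) := by
    refine Integrable.mono'
      (g := fun s => (Icc (t - 1/k) (t + 1/k)).indicator (fun _ => M + B * (K * k)) s)
      ?_ hGmeas ?_
    · rw [integrable_indicator_iff measurableSet_Icc]
      exact integrableOn_const measure_Icc_lt_top.ne
    · refine hae0.mono fun s hs => ?_
      by_cases hmem : s ∈ Icc (t - 1/k) (t + 1/k)
      · simp only [indicator_of_mem hmem]
        rw [Real.norm_eq_abs]
        refine (abs_add_le _ _).trans ?_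
        have e1 : |deriv X s * φ (k * (t - s))| ≤ M := by
          rw [abs_mul, abs_of_nonneg (hφ0 _)]
          calc |deriv X s| * φ (k * (t - s)) ≤ M * 1 := by
                gcongr <;> first | positivity | exact hφ0 _ | exact hφ1 _ | exact (hXd s hs).2
          _ = M := by ring
        have e2 : |X s * (deriv φ (k * (t - s)) * (-k))| ≤ B * (K * k) := by
          rw [abs_mul, abs_mul, abs_neg, abs_of_pos hkpos]
          gcongr <;> first | positivity | exact hXb s | exact hK' _
        linarith
      · have hfar : 1 / k ≤ |t - s| := by
          rw [mem_Icc, not_and_or] at hmem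
          rcases hmem with hmem | hmem <;> push_neg at hmem <;> rw [le_abs] <;>
            [left; right] <;> linarith
        simp only [indicator_of_notMem hmem, hφz' t s hfar, hφ'z' t s hfar]
        simp
    -- integration by parts on (0, ∞)
  have hIoiG : ∫ s in Ioi (0:ℝ),
      (deriv X s * φ (k * (t - s)) + X s * (deriv φ (k * (t - s)) * (-k)))
      = -(Xp * φ (k * t)) := by
    have hcont : ContinuousWithinAt
        (fun s : ℝ => if s = 0 then Xp * φ (k * t) else X s * φ (k * (t - s))) (Ici 0) 0 := by
      rw [← continuousWithinAt_Ioi_iff_Ici]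
      have h1 : Tendsto (fun s : ℝ => φ (k * (t - s))) (nhdsWithin 0 (Ioi 0))
          (nhds (φ (k * t))) := by
        have h2 := ((hcomp_cont t).tendsto 0).mono_left
          (nhdsWithin_le_nhds (s := Ioi (0:ℝ)))
        simpa using h2
      have h3 := hXp.mul h1
      have h4 : ContinuousWithinAt
          (fun s : ℝ => if s = 0 then Xp * φ (k * t) else X s * φ (k * (t - s)))
          (Ioi 0) 0 := by
        rw [ContinuousWithinAt]
        simp only [if_pos rfl]
        refine h3.congr' ?_
        filter_upwards [self_mem_nhdsWithin] with s hs
        rw [if_neg (ne_of_gt hs)]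
      exact h4
    have hder : ∀ x ∈ Ioi (0:ℝ), HasDerivAt
        (fun s : ℝ => if s = 0 then Xp * φ (k * t) else X s * φ (k * (t - s)))
        (deriv X x * φ (k * (t - x)) + X x * (deriv φ (k * (t - x)) * (-k))) x := by
      intro x hx
      have hne : x ≠ 0 := ne_of_gt hx
      have hXhd : HasDerivAt X (deriv X x) x := ((hXd x hne).1).hasDerivAt
      have hinner : HasDerivAt (fun s : ℝ => k * (t - s)) (-k) x := by
        simpa using HasDerivAt.const_mul k ((hasDerivAt_id x).const_sub t)
      have hφhd : HasDerivAt (fun s => φ (k * (t - s))) (deriv φ (k * (t - x)) * (-k)) x :=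
        ((hφd _).hasDerivAt).comp x hinner
      refine (hXhd.mul hφhd).congr_of_eventuallyEq ?_
      filter_upwards [eventually_ne_nhds hne] with s hs
      simp only [if_neg hs, Pi.mul_apply]
    have htend : Tendsto
        (fun s : ℝ => if s = 0 then Xp * φ (k * t) else X s * φ (k * (t - s)))
        atTop (nhds 0) := by
      refine Tendsto.congr' ?_ tendsto_const_nhds
      filter_upwards [eventually_ge_atTop (max 1 (t + 1/k))] with s hs
      have hs1 : (1:ℝ) ≤ s := le_trans (le_max_left _ _) hs
      have hs2 : t + 1/k ≤ s := le_trans (le_max_right _ _) hs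
      have hzero : φ (k * (t - s)) = 0 := hφz' t s (by rw [le_abs]; right; linarith)
      rw [if_neg (one_pos.trans_le hs1).ne', hzero, mul_zero]
    have hres := integral_Ioi_of_hasDerivAt_of_tendsto hcont hder hGint.integrableOn htend
    rw [hres]
    simp
  -- integration by parts on (-∞, 0)
  have hIioG : ∫ s in Iio (0:ℝ),
      (deriv X s * φ (k * (t - s)) + X s * (deriv φ (k * (t - s)) * (-k)))
      = Xm * φ (k * t) := by
    have hcont : ContinuousWithinAt
        (fun s : ℝ => if s = 0 then Xm * φ (k * t) else X s * φ (k * (t - s))) (Iic 0) 0 := by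
      rw [← continuousWithinAt_Iio_iff_Iic]
      have h1 : Tendsto (fun s : ℝ => φ (k * (t - s))) (nhdsWithin 0 (Iio 0))
          (nhds (φ (k * t))) := by
        have h2 := ((hcomp_cont t).tendsto 0).mono_left
          (nhdsWithin_le_nhds (s := Iio (0:ℝ)))
        simpa using h2
      have h3 := hXm.mul h1
      rw [ContinuousWithinAt]
      simp only [if_pos rfl]
      refine h3.congr' ?_
      filter_upwards [self_mem_nhdsWithin] with s hs
      rw [if_neg (ne_of_lt hs)]
    have hder : ∀ x ∈ Iio (0:ℝ), HasDerivAt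
        (fun s : ℝ => if s = 0 then Xm * φ (k * t) else X s * φ (k * (t - s)))
        (deriv X x * φ (k * (t - x)) + X x * (deriv φ (k * (t - x)) * (-k))) x := by
      intro x hx
      have hne : x ≠ 0 := ne_of_lt hx
      have hXhd : HasDerivAt X (deriv X x) x := ((hXd x hne).1).hasDerivAt
      have hinner : HasDerivAt (fun s : ℝ => k * (t - s)) (-k) x := by
        simpa using HasDerivAt.const_mul k ((hasDerivAt_id x).const_sub t)
      have hφhd : HasDerivAt (fun s => φ (k * (t - s))) (deriv φ (k * (t - x)) * (-k)) x :=
        ((hφd _).hasDerivAt).comp x hinner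
      refine (hXhd.mul hφhd).congr_of_eventuallyEq ?_
      filter_upwards [eventually_ne_nhds hne] with s hs
      simp only [if_neg hs, Pi.mul_apply]
    have htend : Tendsto
        (fun s : ℝ => if s = 0 then Xm * φ (k * t) else X s * φ (k * (t - s)))
        atBot (nhds 0) := by
      refine Tendsto.congr' ?_ tendsto_const_nhds
      filter_upwards [eventually_le_atBot (min (-1) (t - 1/k))] with s hs
      have hs1 : s ≤ (-1:ℝ) := le_trans hs (min_le_left _ _)
      have hs2 : s ≤ t - 1/k := le_trans hs (min_le_right _ _)
      have hzero : φ (k * (t - s)) = 0 := hφz' t s (by rw [le_abs]; left; linarith)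
      rw [if_neg (by linarith : s ≠ 0), hzero, mul_zero]
    have hres := my_integral_Iio_of_hasDerivAt_of_tendsto hcont hder hGint.integrableOn htend
    rw [hres]
    simp
  -- splitting the integral of the derivative
  have hF'rw : (fun s => X s * c * (deriv φ (k * (t - s)) * k)) =
      fun s => c * (deriv X s * φ (k * (t - s))) -
        c * (deriv X s * φ (k * (t - s)) + X s * (deriv φ (k * (t - s)) * (-k))) := by
    funext s; ring
  have hsplitIoi : ∫ s in Ioi (0:ℝ), X s * c * (deriv φ (k * (t - s)) * k)
      = c * (∫ s in Ioi (0:ℝ), deriv X s * φ (k * (t - s))) + c * (Xp * φ (k * t)) := by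
    rw [hF'rw, integral_sub ((hψint.const_mul c).integrableOn)
      ((hGint.const_mul c).integrableOn), integral_const_mul, integral_const_mul, hIoiG]
    ring
  have hsplitIio : ∫ s in Iio (0:ℝ), X s * c * (deriv φ (k * (t - s)) * k)
      = c * (∫ s in Iio (0:ℝ), deriv X s * φ (k * (t - s))) - c * (Xm * φ (k * t)) := by
    rw [hF'rw, integral_sub ((hψint.const_mul c).integrableOn)
      ((hGint.const_mul c).integrableOn), integral_const_mul, integral_const_mul, hIioG]
  have htotal : ∫ s, X s * c * (deriv φ (k * (t - s)) * k)
      = c * (∫ s in Iio (0:ℝ), deriv X s * φ (k * (t - s)))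
        + c * (∫ s in Ioi (0:ℝ), deriv X s * φ (k * (t - s)))
        + c * ((Xp - Xm) * φ (k * t)) := by
    rw [← intervalIntegral.integral_Iic_add_Ioi hF'int.integrableOn hF'int.integrableOn,
      integral_Iic_eq_integral_Iio, hsplitIio, hsplitIoi]
    ring
  -- bounding the remainder integrals
  have hbnd : ∀ S : Set ℝ, |∫ s in S, deriv X s * φ (k * (t - s))| ≤ M * (2/k) := by
    intro S
    have h1 : |∫ s in S, deriv X s * φ (k * (t - s))|
        ≤ ∫ s in S, |deriv X s * φ (k * (t - s))| := by
      simpa only [Real.norm_eq_abs] using norm_integral_le_integral_norm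
        (μ := (volume : Measure ℝ).restrict S) (fun s => deriv X s * φ (k * (t - s)))
    have h2 : ∫ s in S, |deriv X s * φ (k * (t - s))|
        ≤ ∫ s, |deriv X s * φ (k * (t - s))| :=
      setIntegral_le_integral hψint.abs (Eventually.of_forall fun s => abs_nonneg _)
    have h3 : ∫ s, |deriv X s * φ (k * (t - s))|
        ≤ ∫ s, (Icc (t - 1/k) (t + 1/k)).indicator (fun _ => M) s := by
      refine integral_mono_ae hψint.abs hψboundInt ?_
      refine hψbound.mono fun s hs => ?_
      simpa only [Real.norm_eq_abs] using hs
    have h4 : ∫ s, (Icc (t - 1/k) (t + 1/k)).indicator (fun _ => M) s = M * (2/k) := by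
      rw [integral_indicator_const _ measurableSet_Icc, measureReal_def, Real.volume_Icc,
        show t + 1/k - (t - 1/k) = 2/k by ring, ENNReal.toReal_ofReal (by positivity),
        smul_eq_mul]
      ring
    linarith
  have hIm := hbnd (Iio 0)
  have hIp := hbnd (Ioi 0)
  rw [hderiv_eq, hrw t, htotal]
  have heq : c * (∫ s in Iio (0:ℝ), deriv X s * φ (k * (t - s)))
      + c * (∫ s in Ioi (0:ℝ), deriv X s * φ (k * (t - s)))
      + c * ((Xp - Xm) * φ (k * t)) - (Xp - Xm) * c * φ (k * t)
      = c * ((∫ s in Iio (0:ℝ), deriv X s * φ (k * (t - s)))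
        + (∫ s in Ioi (0:ℝ), deriv X s * φ (k * (t - s)))) := by ring
  rw [heq, abs_mul, abs_of_pos hcpos]
  have habs : |(∫ s in Iio (0:ℝ), deriv X s * φ (k * (t - s)))
      + (∫ s in Ioi (0:ℝ), deriv X s * φ (k * (t - s)))| ≤ M * (2/k) + M * (2/k) :=
    (abs_add_le _ _).trans (add_le_add hIm hIp)
  calc c * |(∫ s in Iio (0:ℝ), deriv X s * φ (k * (t - s)))
      + (∫ s in Ioi (0:ℝ), deriv X s * φ (k * (t - s)))|
      ≤ c * (M * (2/k) + M * (2/k)) := mul_le_mul_of_nonneg_left habs hcpos.le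
  _ = 2 * M := by
      rw [hc, hk]
      field_simp
      ring
end
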